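/- arXiv:1405.5394 — 4 statements merged into one kernel-verified Lean document; each statement's English description precedes it below -/
import Mathlib

section
/- Let V be a finite-dimensional real vector space, Ω : V → V → ℝ a skew-symmetric bilinear form, and Δ ⊆ V a linear subspace. Define D(Ω,Δ) = {(v,α) ∈ V × V* : v ∈ Δ and α(w) = Ω(v,w) for all w ∈ Δ}. If (u,β) ∈ V × V* satisfies α(u) + β(v) = 0 for every (v,α) ∈ D(Ω,Δ), then (u,β) ∈ D(Ω,Δ); that is, D(Ω,Δ)^⊥ ⊆ D(Ω,Δ). -/
/-!
Pairing `(u, β)` with the elements `(0, φ)`, `φ` in the annihilator of `Δ`, shows that every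
functional killing `Δ` kills `u`, hence `u ∈ Δ`. Pairing it with the graph elements `(w, Ω w)`,
`w ∈ Δ`, gives `β w = -Ω w u`, which is `Ω u w` by skew-symmetry.
-/

section

variable {K V : Type*} [Field K] [AddCommGroup V] [Module K V]

def diracSet (Ω : V →ₗ[K] V →ₗ[K] K) (Δ : Submodule K V) : Set (V × Module.Dual K V) :=
  {x | x.1 ∈ Δ ∧ ∀ w ∈ Δ, x.2 w = Ω x.1 w}

variable {Ω : V →ₗ[K] V →ₗ[K] K} {Δ : Submodule K V}

theorem zero_mem_diracSet {φ : Module.Dual K V} (hφ : φ ∈ Δ.dualAnnihilator) :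
    ((0 : V), φ) ∈ diracSet Ω Δ :=
  ⟨Δ.zero_mem, fun w hw => by simpa using (Submodule.mem_dualAnnihilator φ).mp hφ w hw⟩

theorem apply_mem_diracSet {w : V} (hw : w ∈ Δ) : (w, Ω w) ∈ diracSet Ω Δ :=
  ⟨hw, fun _ _ => rfl⟩

variable {u : V} {β : Module.Dual K V}

theorem mem_of_forall_pairing_eq_zero (h : ∀ x ∈ diracSet Ω Δ, x.2 u + β x.1 = 0) : u ∈ Δ := by
  rw [← Subspace.forall_mem_dualAnnihilator_apply_eq_zero_iff]
  intro φ hφ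
  simpa using h _ (zero_mem_diracSet hφ)

theorem apply_eq_of_forall_pairing_eq_zero (hΩ : ∀ v w, Ω v w = -Ω w v)
    (h : ∀ x ∈ diracSet Ω Δ, x.2 u + β x.1 = 0) {w : V} (hw : w ∈ Δ) : β w = Ω u w := by
  have hpair : Ω w u + β w = 0 := h _ (apply_mem_diracSet hw)
  rw [hΩ u w]
  linear_combination hpair

theorem mem_diracSet_of_forall_pairing_eq_zero (hΩ : ∀ v w, Ω v w = -Ω w v)
    (h : ∀ x ∈ diracSet Ω Δ, x.2 u + β x.1 = 0) : (u, β) ∈ diracSet Ω Δ :=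
  ⟨mem_of_forall_pairing_eq_zero h, fun _ hw => apply_eq_of_forall_pairing_eq_zero hΩ h hw⟩

end

theorem dirac_coisotropic_general {V : Type*} [AddCommGroup V] [Module ℝ V]
    (Ω : V →ₗ[ℝ] V →ₗ[ℝ] ℝ) (hΩ : ∀ v w, Ω v w = - Ω w v)
    (Δ : Submodule ℝ V)
    (D : Set (V × Module.Dual ℝ V))
    (hD : D = {x : V × Module.Dual ℝ V | x.1 ∈ Δ ∧ ∀ w ∈ Δ, x.2 w = Ω x.1 w})
    (u : V) (β : Module.Dual ℝ V)
    (h : ∀ x ∈ D, x.2 u + β x.1 = 0) :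
    (u, β) ∈ D := by
  subst hD
  exact mem_diracSet_of_forall_pairing_eq_zero hΩ h

/-- in finite dimensions, any pair `(u,β)` orthogonal (for the
symmetric pairing `⟪(v,α),(w,β)⟫ = α(w) + β(v)`) to every element of
`D(Ω,Δ) = {(v,α) | v ∈ Δ ∧ ∀ w ∈ Δ, α w = Ω v w}` belongs to `D(Ω,Δ)`;
i.e. `D(Ω,Δ)ᗮ ⊆ D(Ω,Δ)`. -/
theorem dirac_coisotropic {V : Type*} [AddCommGroup V] [Module ℝ V]
    [FiniteDimensional ℝ V]
    (Ω : V →ₗ[ℝ] V →ₗ[ℝ] ℝ) (hΩ : ∀ v w, Ω v w = - Ω w v)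
    (Δ : Submodule ℝ V)
    (D : Set (V × Module.Dual ℝ V))
    (hD : D = {x : V × Module.Dual ℝ V | x.1 ∈ Δ ∧ ∀ w ∈ Δ, x.2 w = Ω x.1 w})
    (u : V) (β : Module.Dual ℝ V)
    (h : ∀ x ∈ D, x.2 u + β x.1 = 0) :
    (u, β) ∈ D :=
  dirac_coisotropic_general Ω hΩ Δ D hD u β h
end

section
/- Let V be a finite-dimensional real vector space, Ω : V → V → ℝ a skew-symmetric bilinear form, and Δ ⊆ V a linear subspace. Then the subspace D(Ω,Δ) = {(v,α) ∈ V × V* : v ∈ Δ and α(w) = Ω(v,w) for all w ∈ Δ} is a Dirac structure on V, i.e. D(Ω,Δ) = D(Ω,Δ)^⊥ with respect to the symmetric pairing ⟪(v,α),(w,β)⟫ = α(w) + β(v). -/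
open Module

section DiracOfForm

variable {K V : Type*} [Field K] [AddCommGroup V] [Module K V]

def diracOfForm (Ω : V →ₗ[K] V →ₗ[K] K) (Δ : Submodule K V) : Set (V × Dual K V) :=
  {x | x.1 ∈ Δ ∧ ∀ w ∈ Δ, x.2 w = Ω x.1 w}

def pairingOrthogonal (D : Set (V × Dual K V)) : Set (V × Dual K V) :=
  {y | ∀ x ∈ D, x.2 y.1 + y.2 x.1 = 0}

variable {Ω : V →ₗ[K] V →ₗ[K] K} {Δ : Submodule K V}

theorem exists_mem_diracOfForm {v : V} (hv : v ∈ Δ) :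
    ∃ α : Dual K V, (v, α) ∈ diracOfForm Ω Δ := by
  obtain ⟨α, hα⟩ := LinearMap.exists_extend ((Ω v).domRestrict Δ)
  exact ⟨α, hv, fun w hw => LinearMap.congr_fun hα ⟨w, hw⟩⟩

theorem zero_prod_mem_diracOfForm {φ : Dual K V} (hφ : φ ∈ Δ.dualAnnihilator) :
    ((0 : V), φ) ∈ diracOfForm Ω Δ :=
  ⟨Δ.zero_mem, fun w hw => by simpa using (Submodule.mem_dualAnnihilator φ).mp hφ w hw⟩

/-- Test `y` against `(0, φ)` for every `φ` annihilating `Δ`. -/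
theorem fst_mem_of_mem_pairingOrthogonal {y : V × Dual K V}
    (hy : y ∈ pairingOrthogonal (diracOfForm Ω Δ)) : y.1 ∈ Δ := by
  rw [← Subspace.forall_mem_dualAnnihilator_apply_eq_zero_iff]
  intro φ hφ
  simpa using hy _ (zero_prod_mem_diracOfForm hφ)

variable (hΩ : ∀ v w, Ω v w = -Ω w v)
include hΩ

theorem diracOfForm_subset_pairingOrthogonal :
    diracOfForm Ω Δ ⊆ pairingOrthogonal (diracOfForm Ω Δ) := by
  rintro ⟨w, β⟩ ⟨hw, hβ⟩ ⟨v, α⟩ ⟨hv, hα⟩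
  simp only at hw hβ hv hα ⊢
  rw [hα w hw, hβ v hv, hΩ w v, add_neg_cancel]

/-- Test `(w, β)` against `(v, α)`, where `α` is any extension of `Ω v` from `Δ` to `V`. -/
theorem pairingOrthogonal_subset_diracOfForm :
    pairingOrthogonal (diracOfForm Ω Δ) ⊆ diracOfForm Ω Δ := by
  rintro ⟨w, β⟩ hy
  have hw : w ∈ Δ := fst_mem_of_mem_pairingOrthogonal hy
  refine ⟨hw, fun v hv => ?_⟩
  obtain ⟨α, hvα⟩ := exists_mem_diracOfForm (Ω := Ω) hv
  have hpair : α w + β v = 0 := hy _ hvα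
  rw [hvα.2 w hw, hΩ v w] at hpair
  linear_combination hpair

theorem diracOfForm_eq_pairingOrthogonal :
    diracOfForm Ω Δ = pairingOrthogonal (diracOfForm Ω Δ) :=
  (diracOfForm_subset_pairingOrthogonal hΩ).antisymm (pairingOrthogonal_subset_diracOfForm hΩ)

end DiracOfForm

theorem dirac_structure_eq_orthogonal_general {V : Type*} [AddCommGroup V] [Module ℝ V]
    (Ω : V →ₗ[ℝ] V →ₗ[ℝ] ℝ) (hΩ : ∀ v w, Ω v w = - Ω w v)
    (Δ : Submodule ℝ V)
    (D : Set (V × Module.Dual ℝ V))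
    (hD : D = {x : V × Module.Dual ℝ V | x.1 ∈ Δ ∧ ∀ w ∈ Δ, x.2 w = Ω x.1 w}) :
    D = {y : V × Module.Dual ℝ V | ∀ x ∈ D, x.2 y.1 + y.2 x.1 = 0} := by
  subst hD
  exact diracOfForm_eq_pairingOrthogonal hΩ

/-- in finite dimensions, `D(Ω,Δ)` is a Dirac structure on `V`,
i.e. it coincides with its orthogonal complement with respect to the symmetric
pairing `⟪(v,α),(w,β)⟫ = α(w) + β(v)` on `V × V*`. -/
theorem dirac_structure_eq_orthogonal {V : Type*} [AddCommGroup V] [Module ℝ V]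
    [FiniteDimensional ℝ V]
    (Ω : V →ₗ[ℝ] V →ₗ[ℝ] ℝ) (hΩ : ∀ v w, Ω v w = - Ω w v)
    (Δ : Submodule ℝ V)
    (D : Set (V × Module.Dual ℝ V))
    (hD : D = {x : V × Module.Dual ℝ V | x.1 ∈ Δ ∧ ∀ w ∈ Δ, x.2 w = Ω x.1 w}) :
    D = {y : V × Module.Dual ℝ V | ∀ x ∈ D, x.2 y.1 + y.2 x.1 = 0} :=
  dirac_structure_eq_orthogonal_general Ω hΩ Δ D hD
end

section
/- Let Δ ⊆ ℝ^n be a linear subspace. Consider on ℝ^n × ℝ^n the canonical symplectic bilinear form Ω_can((a,b),(c,d)) = a·d − b·c and the lifted subspace Δ_T = {(c,d) ∈ ℝ^n × ℝ^n : c ∈ Δ}. Then the induced Dirac structure D = {((a,b),(α,w)) ∈ (ℝ^n × ℝ^n) × (ℝ^n × ℝ^n) : (a,b) ∈ Δ_T and α·c + w·d = Ω_can((a,b),(c,d)) for all (c,d) ∈ Δ_T} equals the set {((a,b),(α,w)) : a ∈ Δ, w = a, and α + b ∈ Δ°}. -/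
open scoped BigOperators

def dot {k : ℕ} (x y : Fin k → ℝ) : ℝ := ∑ i, x i * y i

lemma dot_eq_dotProduct {k : ℕ} (x y : Fin k → ℝ) : dot x y = x ⬝ᵥ y := rfl

/-- Taking `c = 0` isolates the `d`-part of the condition and taking `d = 0` the `c`-part. -/
lemma forall_dot_eq_symplectic_iff {k : ℕ} (Δ : Submodule ℝ (Fin k → ℝ))
    (a b α w : Fin k → ℝ) :
    (∀ c d : Fin k → ℝ, c ∈ Δ → dot α c + dot w d = dot a d - dot b c) ↔
      w = a ∧ ∀ u ∈ Δ, dot (α + b) u = 0 := by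
  simp only [dot_eq_dotProduct, add_dotProduct]
  constructor
  · intro h
    refine ⟨dotProduct_eq w a fun d => ?_, fun u hu => ?_⟩
    · simpa using h 0 d Δ.zero_mem
    · have hu := h u 0 hu
      simp only [dotProduct_zero, add_zero, zero_sub] at hu
      linarith
  · rintro ⟨rfl, h⟩ c d hc
    linarith [h c hc]

/-- local form of the induced Dirac structure.  With
`Ω_can((a,b),(c,d)) = a·d − b·c` on `ℝ^n × ℝ^n` and the lifted subspace
`Δ_T = {(c,d) | c ∈ Δ}`, the induced Dirac structure
`D = {((a,b),(α,w)) | (a,b) ∈ Δ_T ∧ ∀ (c,d) ∈ Δ_T, α·c + w·d = Ω_can((a,b),(c,d))}`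
equals `{((a,b),(α,w)) | a ∈ Δ ∧ w = a ∧ α + b ∈ Δ°}`. -/
theorem induced_dirac_local {n : ℕ} (Δ : Submodule ℝ (Fin n → ℝ)) :
    {x : ((Fin n → ℝ) × (Fin n → ℝ)) × ((Fin n → ℝ) × (Fin n → ℝ)) |
        x.1.1 ∈ Δ ∧
        ∀ c d : Fin n → ℝ, c ∈ Δ →
          dot x.2.1 c + dot x.2.2 d = dot x.1.1 d - dot x.1.2 c} =
    {x : ((Fin n → ℝ) × (Fin n → ℝ)) × ((Fin n → ℝ) × (Fin n → ℝ)) |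
        x.1.1 ∈ Δ ∧ x.2.2 = x.1.1 ∧ ∀ u ∈ Δ, dot (x.2.1 + x.1.2) u = 0} := by
  ext ⟨⟨a, b⟩, α, w⟩
  exact and_congr_right fun _ => forall_dot_eq_symplectic_iff Δ a b α w
end

section
/- Intrinsic implicit vakonomic Euler-Lagrange equations, pointwise form: let 𝔏 : ℝ^n × ℝ^n × ℝ^m → ℝ be differentiable at (q,v,λ), define the generalized energy E(q,v,p,λ) = p·v − 𝔏(q,v,λ) on ℝ^n × ℝ^n × ℝ^n × ℝ^m, and define the presymplectic bilinear form Ω̄ on ℝ^n × ℝ^n × ℝ^n × ℝ^m by Ω̄((q̇,v̇,ṗ,λ̇),(δq,δv,δp,δλ)) = q̇·δp − ṗ·δq. Then for any (q̇,v̇,ṗ,λ̇) ∈ ℝ^n × ℝ^n × ℝ^n × ℝ^m, the linear functional Ω̄((q̇,v̇,ṗ,λ̇), ·) equals the Fréchet derivative of E at (q,v,p,λ) if and only if p = ∂𝔏/∂v(q,v,λ), q̇ = v, ṗ = ∂𝔏/∂q(q,v,λ), and ∂𝔏/∂λ(q,v,λ) = 0. -/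
/-!
The derivative of `E(q,v,p,λ) = p·v − 𝔏(q,v,λ)` at `(q,v,p,λ)` is
`δ ↦ p·δv + v·δp − (∂𝔏/∂q·δq + ∂𝔏/∂v·δv + ∂𝔏/∂λ·δλ)`. It agrees with `Ω̄((q̇,v̇,ṗ,λ̇),·)` iff
the coefficient vectors of `δq, δv, δp, δλ` in the difference all vanish, and these four
conditions are exactly the vakonomic equations.
-/

open scoped BigOperators

noncomputable def dotL (k : ℕ) : (Fin k → ℝ) →L[ℝ] (Fin k → ℝ) →L[ℝ] ℝ :=
  LinearMap.toContinuousLinearMap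
    (LinearMap.toContinuousLinearMap.toLinearMap ∘ₗ dotProductBilin ℝ ℝ)

@[simp] lemma dotL_apply {k : ℕ} (x y : Fin k → ℝ) : dotL k x y = dot x y := rfl

theorem HasFDerivAt.dot {G : Type*} [NormedAddCommGroup G] [NormedSpace ℝ G] {k : ℕ}
    {f g : G → Fin k → ℝ} {f' g' : G →L[ℝ] Fin k → ℝ} {x : G}
    (hf : HasFDerivAt f f' x) (hg : HasFDerivAt g g' x) :
    HasFDerivAt (fun y => _root_.dot (f y) (g y))
      ((dotL k).precompR G (f x) g' + (dotL k).precompL G f' (g x)) x :=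
  (dotL k).hasFDerivAt_of_bilinear hf hg

theorem HasFDerivAt.exists_hasFDerivAt_and_apply_iff {𝕜 E F : Type*}
    [NontriviallyNormedField 𝕜] [NormedAddCommGroup E] [NormedSpace 𝕜 E]
    [NormedAddCommGroup F] [NormedSpace 𝕜 F]
    {f : E → F} {f' : E →L[𝕜] F} {x : E} (hf : HasFDerivAt f f' x) (φ : E → F) :
    (∃ g : E →L[𝕜] F, HasFDerivAt f g x ∧ ∀ y, g y = φ y) ↔ ∀ y, f' y = φ y :=
  ⟨fun ⟨_, hg, hgφ⟩ => hg.unique hf ▸ hgφ, fun h => ⟨f', hf, h⟩⟩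

lemma dot_quadruple_eq_zero_iff {k k' : ℕ} {a b c : Fin k → ℝ} {d : Fin k' → ℝ} :
    (∀ y : (Fin k → ℝ) × (Fin k → ℝ) × (Fin k → ℝ) × (Fin k' → ℝ),
      dot a y.1 + dot b y.2.1 + dot c y.2.2.1 + dot d y.2.2.2 = 0) ↔
    a = 0 ∧ b = 0 ∧ c = 0 ∧ d = 0 := by
  simp only [dot_eq_dotProduct]
  constructor
  · intro h
    refine ⟨dotProduct_eq_zero_iff.1 fun w => ?_, dotProduct_eq_zero_iff.1 fun w => ?_,
      dotProduct_eq_zero_iff.1 fun w => ?_, dotProduct_eq_zero_iff.1 fun w => ?_⟩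
    · simpa using h (w, 0, 0, 0)
    · simpa using h (0, w, 0, 0)
    · simpa using h (0, 0, w, 0)
    · simpa using h (0, 0, 0, w)
  · rintro ⟨rfl, rfl, rfl, rfl⟩ y
    simp

lemma vakonomic_equations_iff {n m : ℕ} {p v qd pd Gq Gv : Fin n → ℝ} {Gl : Fin m → ℝ} :
    (∀ y : (Fin n → ℝ) × (Fin n → ℝ) × (Fin n → ℝ) × (Fin m → ℝ),
      dot p y.2.1 + dot y.2.2.1 v - (dot Gq y.1 + dot Gv y.2.1 + dot Gl y.2.2.2) =
        dot qd y.2.2.1 - dot pd y.1) ↔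
    p = Gv ∧ qd = v ∧ pd = Gq ∧ Gl = 0 := by
  have collect : ∀ y : (Fin n → ℝ) × (Fin n → ℝ) × (Fin n → ℝ) × (Fin m → ℝ),
      dot p y.2.1 + dot y.2.2.1 v - (dot Gq y.1 + dot Gv y.2.1 + dot Gl y.2.2.2) =
        dot qd y.2.2.1 - dot pd y.1 ↔
      dot (pd - Gq) y.1 + dot (p - Gv) y.2.1 + dot (v - qd) y.2.2.1 + dot (-Gl) y.2.2.2 = 0 := by
    intro y
    simp only [dot_eq_dotProduct, sub_dotProduct, neg_dotProduct, dotProduct_comm y.2.2.1 v]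
    constructor <;> intro h <;> linarith
  simp only [collect, dot_quadruple_eq_zero_iff, sub_eq_zero, neg_eq_zero]
  tauto

theorem intrinsic_vakonomic_pointwise_general {n m : ℕ}
    (𝔏 : (Fin n → ℝ) × (Fin n → ℝ) × (Fin m → ℝ) → ℝ)
    (q v p : Fin n → ℝ) (l : Fin m → ℝ)
    (Gq Gv : Fin n → ℝ) (Gl : Fin m → ℝ)
    (h𝔏 : ∃ f : ((Fin n → ℝ) × (Fin n → ℝ) × (Fin m → ℝ)) →L[ℝ] ℝ,
      HasFDerivAt 𝔏 f (q, v, l) ∧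
      ∀ y : (Fin n → ℝ) × (Fin n → ℝ) × (Fin m → ℝ),
        f y = dot Gq y.1 + dot Gv y.2.1 + dot Gl y.2.2)
    (E : (Fin n → ℝ) × (Fin n → ℝ) × (Fin n → ℝ) × (Fin m → ℝ) → ℝ)
    (hE : ∀ x : (Fin n → ℝ) × (Fin n → ℝ) × (Fin n → ℝ) × (Fin m → ℝ),
      E x = dot x.2.2.1 x.2.1 - 𝔏 (x.1, x.2.1, x.2.2.2))
    (qd pd : Fin n → ℝ) :
    (∃ g : ((Fin n → ℝ) × (Fin n → ℝ) × (Fin n → ℝ) × (Fin m → ℝ)) →L[ℝ] ℝ,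
      HasFDerivAt E g (q, v, p, l) ∧
      ∀ y : (Fin n → ℝ) × (Fin n → ℝ) × (Fin n → ℝ) × (Fin m → ℝ),
        g y = dot qd y.2.2.1 - dot pd y.1)
    ↔ (p = Gv ∧ qd = v ∧ pd = Gq ∧ Gl = 0) := by
  obtain ⟨f, hf, hfG⟩ := h𝔏
  have hdE : HasFDerivAt (fun x : (Fin n → ℝ) × (Fin n → ℝ) × (Fin n → ℝ) × (Fin m → ℝ) =>
      dot x.2.2.1 x.2.1 - 𝔏 (x.1, x.2.1, x.2.2.2)) _ (q, v, p, l) :=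
    (hasFDerivAt_snd.snd.fst.dot hasFDerivAt_snd.fst).sub <| hf.comp (q, v, p, l) <|
      hasFDerivAt_fst.prodMk <| hasFDerivAt_snd.fst.prodMk hasFDerivAt_snd.snd.snd
  rw [show E = _ from funext hE, hdE.exists_hasFDerivAt_and_apply_iff, ← vakonomic_equations_iff]
  simp [hfG]

/-- intrinsic implicit vakonomic Euler-Lagrange equations,
pointwise form.  With `E(q,v,p,λ) = p·v − 𝔏(q,v,λ)` and the presymplectic
form `Ω̄((q̇,v̇,ṗ,λ̇),(δq,δv,δp,δλ)) = q̇·δp − ṗ·δq`, the functional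
`Ω̄((q̇,v̇,ṗ,λ̇),·)` is the Fréchet derivative of `E` at `(q,v,p,λ)` iff
`p = ∂𝔏/∂v`, `q̇ = v`, `ṗ = ∂𝔏/∂q` and `∂𝔏/∂λ = 0`.  Here `Gq, Gv, Gl`
are the vectors representing the partial Fréchet derivatives of `𝔏`. -/
theorem intrinsic_vakonomic_pointwise {n m : ℕ}
    (𝔏 : (Fin n → ℝ) × (Fin n → ℝ) × (Fin m → ℝ) → ℝ)
    (q v p : Fin n → ℝ) (l : Fin m → ℝ)
    (Gq Gv : Fin n → ℝ) (Gl : Fin m → ℝ)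
    (h𝔏 : ∃ f : ((Fin n → ℝ) × (Fin n → ℝ) × (Fin m → ℝ)) →L[ℝ] ℝ,
      HasFDerivAt 𝔏 f (q, v, l) ∧
      ∀ y : (Fin n → ℝ) × (Fin n → ℝ) × (Fin m → ℝ),
        f y = dot Gq y.1 + dot Gv y.2.1 + dot Gl y.2.2)
    (E : (Fin n → ℝ) × (Fin n → ℝ) × (Fin n → ℝ) × (Fin m → ℝ) → ℝ)
    (hE : ∀ x : (Fin n → ℝ) × (Fin n → ℝ) × (Fin n → ℝ) × (Fin m → ℝ),
      E x = dot x.2.2.1 x.2.1 - 𝔏 (x.1, x.2.1, x.2.2.2))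
    (qd vd pd : Fin n → ℝ) (ld : Fin m → ℝ) :
    (∃ g : ((Fin n → ℝ) × (Fin n → ℝ) × (Fin n → ℝ) × (Fin m → ℝ)) →L[ℝ] ℝ,
      HasFDerivAt E g (q, v, p, l) ∧
      ∀ y : (Fin n → ℝ) × (Fin n → ℝ) × (Fin n → ℝ) × (Fin m → ℝ),
        g y = dot qd y.2.2.1 - dot pd y.1)
    ↔ (p = Gv ∧ qd = v ∧ pd = Gq ∧ Gl = 0) :=
  intrinsic_vakonomic_pointwise_general 𝔏 q v p l Gq Gv Gl h𝔏 E hE qd pd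
end
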